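/- If G is a simple connected graph on n ≥ 4 vertices whose complement Ḡ is also connected, then ξ_c(G) + ξ_c(Ḡ) ≥ 2·(M_1(G) + M_1(Ḡ)), with equality if and only if every vertex of both G and Ḡ has eccentricity 2. -/
import Mathlib


open Finset

variable {V : Type*} [Fintype V] [DecidableEq V]

/-- Eccentricity of a vertex: the largest distance to any vertex. -/
noncomputable def eccent (G : SimpleGraph V) (v : V) : ℕ := univ.sup (G.dist v)

/-- `ndegSum G v` is `δ(v)`: the sum of degrees of the neighbors of `v`. -/
def ndegSum (G : SimpleGraph V) [DecidableRel G.Adj] (v : V) : ℕ :=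
  ∑ u ∈ G.neighborFinset v, G.degree u

/-- The modified eccentric connectivity index `ξ_c(G)`. -/
noncomputable def xiC (G : SimpleGraph V) [DecidableRel G.Adj] : ℕ :=
  ∑ v, ndegSum G v * eccent G v

/-- The eccentric connectivity index `ξ^c(G)`. -/
noncomputable def eccIndex (G : SimpleGraph V) [DecidableRel G.Adj] : ℕ :=
  ∑ v, G.degree v * eccent G v

/-- The first Zagreb index `M₁(G)`. -/
def M1 (G : SimpleGraph V) [DecidableRel G.Adj] : ℕ := ∑ v, G.degree v ^ 2

lemma aux_exists_adj (G : SimpleGraph V) (hG : G.Connected) (hn : 2 ≤ Fintype.card V) (v : V) :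
    ∃ u, G.Adj v u := by
  obtain ⟨u, hu⟩ := Fintype.exists_ne_of_one_lt_card hn v
  obtain ⟨p⟩ := hG.preconnected v u
  cases p with
  | nil => exact absurd rfl hu
  | cons h q => exact ⟨_, h⟩

lemma aux_sum_ndegSum (G : SimpleGraph V) [DecidableRel G.Adj] :
    ∑ v, ndegSum G v = M1 G := by
  unfold ndegSum M1
  simp only [SimpleGraph.neighborFinset_eq_filter, Finset.sum_filter]
  rw [Finset.sum_comm]
  refine Finset.sum_congr rfl fun u _ => ?_
  simp only [Finset.sum_ite_eq', ← Finset.sum_filter]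
  have h : filter (fun a => G.Adj a u) univ = G.neighborFinset u := by
    ext a; simp [SimpleGraph.adj_comm]
  rw [Finset.sum_const, h, smul_eq_mul, sq, SimpleGraph.card_neighborFinset_eq_degree]

lemma aux_two_le_eccent (G : SimpleGraph V) (hG : G.Connected) (hGc : Gᶜ.Connected)
    (hn : 2 ≤ Fintype.card V) (v : V) : 2 ≤ eccent G v := by
  obtain ⟨u, hu⟩ := aux_exists_adj Gᶜ hGc hn v
  rw [SimpleGraph.compl_adj] at hu
  have h2 : 2 ≤ G.dist v u := by
    by_contra h
    push_neg at h
    interval_cases hd : G.dist v u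
    · exact hu.1 (hG.dist_eq_zero_iff.mp hd)
    · exact hu.2 (SimpleGraph.dist_eq_one_iff_adj.mp hd)
  exact le_trans h2 (Finset.le_sup (Finset.mem_univ u))

lemma aux_ndegSum_pos (G : SimpleGraph V) [DecidableRel G.Adj] (hG : G.Connected)
    (hn : 2 ≤ Fintype.card V) (v : V) : 0 < ndegSum G v := by
  obtain ⟨u, hu⟩ := aux_exists_adj G hG hn v
  have hdu : 0 < G.degree u := by
    rw [SimpleGraph.degree_pos_iff_exists_adj]; exact ⟨v, hu.symm⟩
  calc 0 < G.degree u := hdu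
    _ ≤ ndegSum G v := by unfold ndegSum; exact Finset.single_le_sum (f := fun w => G.degree w) (fun _ _ => Nat.zero_le _) ((SimpleGraph.mem_neighborFinset G v u).mpr hu)

lemma aux_le_xiC (G : SimpleGraph V) [DecidableRel G.Adj] (hG : G.Connected)
    (hGc : Gᶜ.Connected) (hn : 2 ≤ Fintype.card V) : 2 * M1 G ≤ xiC G := by
  rw [← aux_sum_ndegSum, Finset.mul_sum]
  exact Finset.sum_le_sum fun v _ => by
    rw [mul_comm]
    exact Nat.mul_le_mul_left _ (aux_two_le_eccent G hG hGc hn v)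

theorem nordhaus_gaddum (G : SimpleGraph V) [DecidableRel G.Adj]
    (hn : 4 ≤ Fintype.card V) (hG : G.Connected) (hGc : Gᶜ.Connected) :
    2 * (M1 G + M1 Gᶜ) ≤ xiC G + xiC Gᶜ ∧
      (xiC G + xiC Gᶜ = 2 * (M1 G + M1 Gᶜ) ↔
        ∀ v, eccent G v = 2 ∧ eccent Gᶜ v = 2) := by
  have hn2 : 2 ≤ Fintype.card V := le_trans (by norm_num) hn
  have hGcc : Gᶜᶜ = G := compl_compl G
  have hG' : Gᶜᶜ.Connected := by rwa [hGcc]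
  have h1 : 2 * M1 G ≤ xiC G := aux_le_xiC G hG hGc hn2
  have h2 : 2 * M1 Gᶜ ≤ xiC Gᶜ := aux_le_xiC Gᶜ hGc hG' hn2
  refine ⟨by omega, ?_, ?_⟩
  · intro heq
    have e1 : xiC G = 2 * M1 G := by omega
    have e2 : xiC Gᶜ = 2 * M1 Gᶜ := by omega
    have key : ∀ (H : SimpleGraph V) [DecidableRel H.Adj], H.Connected → Hᶜ.Connected →
        xiC H = 2 * M1 H → ∀ v, eccent H v = 2 := by
      intro H _ hH hHc he v
      have hsum : ∑ u, ndegSum H u * eccent H u = ∑ u, ndegSum H u * 2 := by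
        rw [← xiC]; rw [he, ← aux_sum_ndegSum, Finset.mul_sum]
        exact Finset.sum_congr rfl fun u _ => mul_comm _ _
      have hle : ∀ u ∈ univ, ndegSum H u * 2 ≤ ndegSum H u * eccent H u := fun u _ =>
        Nat.mul_le_mul_left _ (aux_two_le_eccent H hH hHc hn2 u)
      have := (Finset.sum_eq_sum_iff_of_le hle).mp hsum.symm v (Finset.mem_univ v)
      have hp := aux_ndegSum_pos H hH hn2 v
      exact (Nat.eq_of_mul_eq_mul_left hp this).symm
    intro v
    exact ⟨key G hG hGc e1 v, key Gᶜ hGc hG' e2 v⟩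
  · intro hall
    have eg : ∀ (H : SimpleGraph V) [DecidableRel H.Adj], (∀ v, eccent H v = 2) →
        xiC H = 2 * M1 H := by
      intro H _ he
      rw [xiC, ← aux_sum_ndegSum, Finset.mul_sum]
      exact Finset.sum_congr rfl fun v _ => by rw [he v, mul_comm]
    rw [eg G (fun v => (hall v).1), eg Gᶜ (fun v => (hall v).2)]
    ring
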